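/- Let p be a prime and let A → B be an étale homomorphism of commutative rings. For all integers 1 ≤ m ≤ n, the canonical map W_m(A) ⊗_{W_n(A)} W_n(B) → W_m(B), a ⊗ b ↦ W_m(A→B)(a) · (restriction of b from length n to length m), is an isomorphism. Here W_m(A) is a W_n(A)-algebra via the restriction (truncation) map W_n(A) → W_m(A), and W_n(B) is a W_n(A)-algebra via functoriality. (This is the p-typical case of Corollary 1.1.4(i) of the paper.) -/

import Mathlib

/-!
Statement 4: Let `p` be a prime and `A → B` an étale homomorphism of commutative rings.
For all `1 ≤ m ≤ n`, the canonical map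
`W_m(A) ⊗_{W_n(A)} W_n(B) → W_m(B)`, `a ⊗ b ↦ W_m(A→B)(a) · (restriction of b)`,
is an isomorphism.  Here `W_m(A)` is a `W_n(A)`-algebra via the truncation map and
`W_n(B)` is a `W_n(A)`-algebra via functoriality.
-/

open scoped TensorProduct

namespace TruncatedWittVector

variable {p : ℕ} [Fact p.Prime] {n : ℕ} {R S : Type*} [CommRing R] [CommRing S]

/-- Functoriality of truncated Witt vectors: the ring homomorphism
`W_n(R) → W_n(S)` induced by a ring homomorphism `R → S`. -/
noncomputable def map (f : R →+* S) :
    TruncatedWittVector p n R →+* TruncatedWittVector p n S :=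
  RingHom.liftOfRightInverse (WittVector.truncate n) out truncateFun_out
    ⟨(WittVector.truncate n).comp (WittVector.map f), by
      intro x hx
      rw [WittVector.mem_ker_truncate] at hx
      rw [RingHom.mem_ker, RingHom.comp_apply, ← RingHom.mem_ker,
        WittVector.mem_ker_truncate]
      intro i hi
      rw [WittVector.map_coeff, hx i hi, map_zero]⟩

/-- `map f` is the coefficientwise application of `f`. -/
theorem map_coeff' (f : R →+* S) (x : TruncatedWittVector p n R) (i : Fin n) :
    (map f x).coeff i = f (x.coeff i) := by
  obtain ⟨y, rfl⟩ := WittVector.truncate_surjective p n R x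
  have h1 : map f (WittVector.truncate n y) =
      WittVector.truncate n (WittVector.map f y) :=
    RingHom.liftOfRightInverse_comp_apply _ _ _ _ y
  rw [h1, WittVector.coeff_truncate, WittVector.coeff_truncate, WittVector.map_coeff]

end TruncatedWittVector

/-!
Surjectivity is clear; the content is that the kernel `V^m W_n(B)` of `W_n(B) → W_m(B)` is
generated by the image of `V^m W_n(A)`.

Let `C ⊆ B/p` be the `A`-subalgebra generated by `p`-th powers. Since `B/p` is unramified over `C`,
the kernel of `B/p ⊗_C B/p → B/p` is generated by an idempotent; it is also nil, because
`(1 ⊗ s - s ⊗ 1)^p = 0`. So it vanishes: `C → B/p` is an epimorphism, and being finite it is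
surjective. Hence `B` is spanned over `A` by `p^k`-th powers modulo `p^k`. Lifting such sums
through Teichmüller representatives shows, one Witt coefficient at a time, that every Witt vector
over `B` is, modulo `V^k`, a sum of products `f(α) · F^r(y)`, where `f : W(A) → W(B)` is induced
by `A → B`. The projection formula
`V^m(f(α) · F^m(y)) = f(V^m α) · y` concludes.
-/

theorem Algebra.isEpi_of_formallyUnramified_of_isNilpotent {R S : Type*} [CommRing R]
    [CommRing S] [Algebra R S] [Algebra.EssFiniteType R S] [Algebra.FormallyUnramified R S]
    (h : ∀ s : S, IsNilpotent ((1 : S) ⊗ₜ[R] s - s ⊗ₜ[R] 1)) : Algebra.IsEpi R S := by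
  obtain ⟨e, he, hspan⟩ :
      ∃ e, IsIdempotentElem e ∧ KaehlerDifferential.ideal R S = S ⊗[R] S ∙ e :=
    (Ideal.isIdempotentElem_iff_of_fg _ (KaehlerDifferential.ideal_fg R S)).mp <|
      (Ideal.cotangent_subsingleton_iff _).mp <| inferInstanceAs <| Subsingleton Ω[S⁄R]
  have hnil : KaehlerDifferential.ideal R S ≤ nilradical (S ⊗[R] S) := by
    rw [← KaehlerDifferential.span_range_eq_ideal, Ideal.span_le]
    rintro _ ⟨s, rfl⟩
    exact h s
  have he0 : e = 0 :=
    he.eq_zero_of_isNilpotent (hnil (hspan ▸ Submodule.mem_span_singleton_self e))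
  refine (Algebra.isEpi_iff_forall_one_tmul_eq R S).mpr fun s => sub_eq_zero.mp ?_
  have hs := KaehlerDifferential.one_smul_sub_smul_one_mem_ideal R s
  rwa [hspan, he0, Submodule.span_singleton_eq_bot.mpr rfl, Submodule.mem_bot] at hs

theorem sub_pow_prime_eq_of_natCast_eq_zero {R : Type*} [CommRing R] {p : ℕ} (hp : p.Prime)
    (h : (p : R) = 0) (x y : R) : (x - y) ^ p = x ^ p - y ^ p := by
  obtain ⟨r, hr⟩ := exists_add_pow_prime_eq hp y (x - y)
  rw [add_sub_cancel, h] at hr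
  linear_combination -hr

theorem Algebra.isEpi_of_natCast_eq_zero_of_pow_mem_range {R S : Type*} [CommRing R]
    [CommRing S] [Algebra R S] [Algebra.EssFiniteType R S] [Algebra.FormallyUnramified R S]
    {p : ℕ} (hp : p.Prime) (hpS : (p : S) = 0) (h : ∀ s : S, s ^ p ∈ (algebraMap R S).range) :
    Algebra.IsEpi R S := by
  refine isEpi_of_formallyUnramified_of_isNilpotent fun s => ⟨p, ?_⟩
  have hp0 : (p : S ⊗[R] S) = 0 := by
    rw [← map_natCast (algebraMap S (S ⊗[R] S)), hpS, map_zero]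
  obtain ⟨r, hr⟩ := h s
  rw [sub_pow_prime_eq_of_natCast_eq_zero hp hp0, Algebra.TensorProduct.tmul_pow,
    Algebra.TensorProduct.tmul_pow, one_pow, ← hr, Algebra.TensorProduct.tmul_one_eq_one_tmul,
    sub_self]

theorem span_range_pow_eq_top_of_formallyUnramified {R S : Type*} [CommRing R] [CommRing S]
    [Algebra R S] [Algebra.FiniteType R S] [Algebra.FormallyUnramified R S] {p : ℕ}
    (hp : p.Prime) (hpS : (p : S) = 0) :
    Submodule.span R (Set.range fun s : S => s ^ p) = ⊤ := by
  set C := Algebra.adjoin R (Set.range fun s : S => s ^ p)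
  have hpow : ∀ s : S, s ^ p ∈ (algebraMap C S).range :=
    fun s => ⟨⟨s ^ p, Algebra.subset_adjoin ⟨s, rfl⟩⟩, rfl⟩
  have : Algebra.FormallyUnramified C S := .of_restrictScalars R C S
  have : Algebra.FiniteType C S := .of_restrictScalars_finiteType R C S
  have : Algebra.IsIntegral C S := ⟨fun s => by
    obtain ⟨c, hc⟩ := hpow s
    exact ⟨Polynomial.X ^ p - Polynomial.C c, Polynomial.monic_X_pow_sub_C c hp.ne_zero,
      by simp [hc]⟩⟩
  have : Module.Finite C S := Algebra.IsIntegral.finite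
  have hsurj : Function.Surjective (algebraMap C S) :=
    Algebra.isEpi_iff_surjective_algebraMap_of_finite.mp
      (Algebra.isEpi_of_natCast_eq_zero_of_pow_mem_range hp hpS hpow)
  have hclosure : (Submonoid.closure (Set.range fun s : S => s ^ p) : Set S) =
      Set.range fun s : S => s ^ p := by
    rw [show (Set.range fun s : S => s ^ p) = MonoidHom.mrange (powMonoidHom p : S →* S) from rfl,
      Submonoid.closure_eq]
  rw [eq_top_iff, ← hclosure, ← Algebra.adjoin_eq_span]
  intro s _
  obtain ⟨c, rfl⟩ := hsurj s
  exact c.2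

theorem pow_mem_span_range_pow_pow_succ {R S : Type*} [CommRing R] [CommRing S]
    [Algebra R S] {p : ℕ} (hp : p.Prime) (hpS : (p : S) = 0) (k : ℕ) {x : S}
    (hx : x ∈ Submodule.span R (Set.range fun s : S => s ^ p ^ k)) :
    x ^ p ∈ Submodule.span R (Set.range fun s : S => s ^ p ^ (k + 1)) := by
  induction hx using Submodule.span_induction with
  | mem _ hx =>
    obtain ⟨s, rfl⟩ := hx
    exact Submodule.subset_span ⟨s, by simp only [pow_succ, pow_mul]⟩
  | zero => rw [zero_pow hp.ne_zero]; exact zero_mem _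
  | add x y _ _ hx hy =>
    obtain ⟨r, hr⟩ := exists_add_pow_prime_eq hp x y
    rw [hr, hpS, zero_mul, zero_mul, zero_mul, add_zero]
    exact add_mem hx hy
  | smul a x _ hx => rw [smul_pow]; exact Submodule.smul_mem _ _ hx

theorem span_range_pow_pow_eq_top_of_formallyUnramified {R S : Type*} [CommRing R]
    [CommRing S] [Algebra R S] [Algebra.FiniteType R S] [Algebra.FormallyUnramified R S]
    {p : ℕ} (hp : p.Prime) (hpS : (p : S) = 0) (k : ℕ) :
    Submodule.span R (Set.range fun s : S => s ^ p ^ k) = ⊤ := by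
  induction k with
  | zero => simp
  | succ k ih =>
    rw [eq_top_iff, ← span_range_pow_eq_top_of_formallyUnramified hp hpS, Submodule.span_le]
    rintro _ ⟨s, rfl⟩
    exact pow_mem_span_range_pow_pow_succ hp hpS k (ih ▸ Submodule.mem_top)

theorem exists_mem_span_range_pow_pow_eq_add_prime_mul {R S : Type*} [CommRing R] [CommRing S]
    [Algebra R S] [Algebra.FiniteType R S] [Algebra.FormallyUnramified R S] {p : ℕ}
    (hp : p.Prime) (k : ℕ) (b : S) :
    ∃ u ∈ Submodule.span R (Set.range fun s : S => s ^ p ^ k), ∃ d, b = u + p * d := by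
  let q := Ideal.Quotient.mkₐ R (Ideal.span {(p : S)})
  have hq : Function.Surjective q := Ideal.Quotient.mk_surjective
  have hpS : (p : S ⧸ Ideal.span {(p : S)}) = 0 := by
    rw [← map_natCast (Ideal.Quotient.mk _), Ideal.Quotient.eq_zero_iff_mem]
    exact Ideal.mem_span_singleton_self _
  have : Algebra.FiniteType R (S ⧸ Ideal.span {(p : S)}) := .of_surjective q hq
  have hpow : ⇑q.toLinearMap ∘ (fun s : S => s ^ p ^ k) = (fun s => s ^ p ^ k) ∘ q :=
    funext fun s => map_pow q s _
  have hb : q b ∈ (Submodule.span R (Set.range fun s : S => s ^ p ^ k)).map q.toLinearMap := by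
    rw [Submodule.map_span, ← Set.range_comp, hpow, hq.range_comp,
      span_range_pow_pow_eq_top_of_formallyUnramified hp hpS k]
    exact Submodule.mem_top
  obtain ⟨u, hu, hqu⟩ := hb
  obtain ⟨d, hd⟩ := Ideal.mem_span_singleton'.mp (Ideal.Quotient.eq.mp hqu.symm)
  exact ⟨u, hu, d, by linear_combination -hd⟩

theorem exists_mem_span_range_pow_pow_eq_add_mul {R S : Type*} [CommRing R] [CommRing S]
    [Algebra R S] [Algebra.FiniteType R S] [Algebra.FormallyUnramified R S] {p : ℕ}
    (hp : p.Prime) (k N : ℕ) (b : S) :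
    ∃ u ∈ Submodule.span R (Set.range fun s : S => s ^ p ^ k), ∃ d, b = u + p ^ N * d := by
  induction N generalizing b with
  | zero => exact ⟨0, zero_mem _, b, by ring⟩
  | succ N ih =>
    obtain ⟨u, hu, d, rfl⟩ := ih b
    obtain ⟨u', hu', d', rfl⟩ := exists_mem_span_range_pow_pow_eq_add_prime_mul (R := R) hp k d
    refine ⟨u + p ^ N * u', add_mem hu ?_, d', by ring⟩
    rw [← Nat.cast_pow, ← nsmul_eq_mul]
    exact nsmul_mem hu' _

theorem Algebra.TensorProduct.lift_bijective_of_ker_le_map {R S T U : Type*} [CommRing R]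
    [CommRing S] [CommRing T] [CommRing U] [Algebra R S] [Algebra R T] [Algebra R U]
    (f : S →ₐ[R] U) (g : T →ₐ[R] U) (hS : Function.Surjective (algebraMap R S))
    (hg : Function.Surjective g)
    (hker : RingHom.ker g ≤ (RingHom.ker (algebraMap R S)).map (algebraMap R T)) :
    Function.Bijective (lift f g fun _ _ => .all _ _) := by
  have hlift : ∀ t : T, lift f g (fun _ _ => .all _ _) ((1 : S) ⊗ₜ[R] t) = g t := fun t => by
    rw [lift_tmul, map_one, one_mul]
  have hmap : (RingHom.ker (algebraMap R S)).map (algebraMap R T) ≤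
      RingHom.ker (includeRight : T →ₐ[R] S ⊗[R] T) := by
    rw [Ideal.map_le_iff_le_comap]
    intro r hr
    rw [Ideal.mem_comap, RingHom.mem_ker, AlgHom.commutes, algebraMap_apply,
      RingHom.mem_ker.mp hr, TensorProduct.zero_tmul]
  refine ⟨(injective_iff_map_eq_zero _).mpr fun x hx => ?_, fun u => ?_⟩
  · obtain ⟨t, rfl⟩ := includeRight_surjective T hS x
    exact hmap (hker (by rwa [RingHom.mem_ker, ← hlift]))
  · obtain ⟨t, rfl⟩ := hg u
    exact ⟨1 ⊗ₜ t, hlift t⟩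

namespace WittVector

variable {p : ℕ} [hp : Fact p.Prime]

local notation "𝕎" => WittVector p

section

variable {R S : Type*} [CommRing R] [CommRing S]

theorem map_iterate_verschiebung (f : R →+* S) (x : 𝕎 R) (k : ℕ) :
    map f (verschiebung^[k] x) = verschiebung^[k] (map f x) :=
  (Function.Semiconj.iterate_right (map_verschiebung f) k) x

theorem iterate_verschiebung_map_mul_iterate_frobenius (f : R →+* S) (α : 𝕎 R) (y : 𝕎 S)
    (k : ℕ) : verschiebung^[k] (map f α * frobenius^[k] y) = map f (verschiebung^[k] α) * y := by
  rw [← iterate_verschiebung_mul_left, map_iterate_verschiebung]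

theorem iterate_verschiebung_mem_ker_truncate {j : ℕ} {x : 𝕎 R}
    (hx : x ∈ RingHom.ker (truncate (p := p) (R := R) j)) (k : ℕ) :
    verschiebung^[k] x ∈ RingHom.ker (truncate (p := p) (R := R) (j + k)) := by
  rw [mem_ker_truncate] at hx ⊢
  intro i hi
  rcases lt_or_ge i k with hik | hki
  · exact iterate_verschiebung_coeff_eq_zero x hik
  · obtain ⟨i, rfl⟩ := Nat.exists_eq_add_of_le' hki
    rw [iterate_verschiebung_coeff]
    exact hx i (by omega)

theorem coeff_zero_iterate_frobenius (x : 𝕎 R) (k : ℕ) :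
    (frobenius^[k] x).coeff 0 = ghostComponent k x := by
  induction k generalizing x with
  | zero => simp [ghostComponent_apply]
  | succ k ih => rw [Function.iterate_succ_apply, ih, ghostComponent_frobenius]

theorem ghostComponent_iterate_verschiebung (x : 𝕎 R) (k : ℕ) :
    ghostComponent k (verschiebung^[k] x) = p ^ k * x.coeff 0 := by
  induction k with
  | zero => simp [ghostComponent_apply]
  | succ k ih =>
    rw [Function.iterate_succ_apply', ghostComponent_verschiebung, ih, pow_succ', mul_assoc]

theorem coeff_zero_map_mul_iterate_frobenius (f : R →+* S) (α : 𝕎 R) (y : 𝕎 S) (k : ℕ) :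
    (map f α * frobenius^[k] y).coeff 0 = f (α.coeff 0) * ghostComponent k y := by
  rw [mul_coeff_zero, map_coeff, coeff_zero_iterate_frobenius]

end

section FrobeniusSpan

variable (p) (A B : Type*) [CommRing A] [CommRing B] [Algebra A B]

/-- The `W(A)`-submodule of `W(B)` generated by `F^r(W(B))`. -/
noncomputable def frobeniusSpan (r : ℕ) : AddSubgroup (𝕎 B) :=
  AddSubgroup.closure {x | ∃ α y, map (algebraMap A B) α * frobenius^[r] y = x}

variable {p A B}

theorem iterate_verschiebung_mem_frobeniusSpan {k r : ℕ} {x : 𝕎 B}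
    (hx : x ∈ frobeniusSpan p A B (k + r)) : verschiebung^[k] x ∈ frobeniusSpan p A B r := by
  induction hx using AddSubgroup.closure_induction with
  | mem _ hx =>
    obtain ⟨α, y, rfl⟩ := hx
    rw [Function.iterate_add_apply, iterate_verschiebung_map_mul_iterate_frobenius]
    exact AddSubgroup.subset_closure ⟨_, _, rfl⟩
  | zero => rw [iterate_map_zero]; exact zero_mem _
  | add x y _ _ hx hy => rw [iterate_map_add]; exact add_mem hx hy
  | neg x _ hx => rw [iterate_map_neg]; exact neg_mem hx

theorem iterate_verschiebung_mem_map_ker_truncate {m : ℕ} {x : 𝕎 B}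
    (hx : x ∈ frobeniusSpan p A B m) :
    verschiebung^[m] x ∈
      (RingHom.ker (truncate (p := p) (R := A) m)).map (map (algebraMap A B)) := by
  induction hx using AddSubgroup.closure_induction with
  | mem _ hx =>
    obtain ⟨α, y, rfl⟩ := hx
    rw [iterate_verschiebung_map_mul_iterate_frobenius]
    refine Ideal.mul_mem_right _ _ (Ideal.mem_map_of_mem _ ?_)
    exact (mem_ker_truncate _ _).mpr fun i hi => iterate_verschiebung_coeff_eq_zero α hi
  | zero => rw [iterate_map_zero]; exact zero_mem _
  | add x y _ _ hx hy => rw [iterate_map_add]; exact add_mem hx hy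
  | neg x _ hx => rw [iterate_map_neg]; exact neg_mem hx

variable [Algebra.FiniteType A B] [Algebra.FormallyUnramified A B]

theorem exists_mem_frobeniusSpan_coeff_zero_eq (k : ℕ) (b : B) :
    ∃ μ ∈ frobeniusSpan p A B k, μ.coeff 0 = b := by
  obtain ⟨u, hu, d, rfl⟩ := exists_mem_span_range_pow_pow_eq_add_mul (R := A) hp.out k k b
  obtain ⟨c, rfl⟩ := Finsupp.mem_span_range_iff_exists_finsupp.mp hu
  refine ⟨c.sum (fun x a => map (algebraMap A B) (teichmuller p a) *
      frobenius^[k] (teichmuller p x)) + frobenius^[k] (verschiebung^[k] (teichmuller p d)),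
    add_mem (sum_mem fun x _ => AddSubgroup.subset_closure ⟨_, _, rfl⟩)
      (AddSubgroup.subset_closure ⟨1, _, by rw [map_one, one_mul]⟩), ?_⟩
  rw [← constantCoeff_apply]
  simp only [map_add, map_finsuppSum, constantCoeff_apply, coeff_zero_map_mul_iterate_frobenius,
    coeff_zero_iterate_frobenius, teichmuller_coeff_zero, ghostComponent_teichmuller,
    ghostComponent_iterate_verschiebung, Algebra.smul_def]

theorem exists_mem_frobeniusSpan_sub_mem_ker_truncate (r k : ℕ) (w : 𝕎 B) :
    ∃ μ ∈ frobeniusSpan p A B r, w - μ ∈ RingHom.ker (truncate (p := p) (R := B) k) := by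
  induction k with
  | zero =>
    exact ⟨0, zero_mem _, (mem_ker_truncate _ _).mpr fun i hi => absurd hi (Nat.not_lt_zero i)⟩
  | succ k ih =>
    obtain ⟨μ, hμ, hk⟩ := ih
    set x := (w - μ).shift k
    have hx : w - μ = verschiebung^[k] x :=
      eq_iterate_verschiebung ((mem_ker_truncate _ _).mp hk)
    obtain ⟨ν, hν, hνx⟩ := exists_mem_frobeniusSpan_coeff_zero_eq (p := p) (A := A) (k + r)
      (x.coeff 0)
    refine ⟨μ + verschiebung^[k] ν, add_mem hμ (iterate_verschiebung_mem_frobeniusSpan hν), ?_⟩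
    have hxν : x - ν ∈ RingHom.ker (truncate (p := p) (R := B) 1) := by
      rw [mem_ker_truncate]
      intro i hi
      rw [Nat.lt_one_iff.mp hi, ← constantCoeff_apply, map_sub, constantCoeff_apply,
        constantCoeff_apply, hνx, sub_self]
    rw [sub_add_eq_sub_sub, hx, ← iterate_map_sub, add_comm]
    exact iterate_verschiebung_mem_ker_truncate hxν k

theorem ker_truncate_le_map_ker_truncate_sup {m n : ℕ} (hmn : m ≤ n) :
    RingHom.ker (truncate (p := p) (R := B) m) ≤
      (RingHom.ker (truncate (p := p) (R := A) m)).map (map (algebraMap A B)) ⊔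
        RingHom.ker (truncate (p := p) (R := B) n) := by
  intro z hz
  rw [eq_iterate_verschiebung ((mem_ker_truncate _ _).mp hz)]
  obtain ⟨μ, hμ, he⟩ :=
    exists_mem_frobeniusSpan_sub_mem_ker_truncate (A := A) m (n - m) (z.shift m)
  have hV := iterate_verschiebung_mem_ker_truncate he m
  rw [Nat.sub_add_cancel hmn] at hV
  rw [← add_sub_cancel μ (z.shift m), iterate_map_add]
  exact Submodule.add_mem_sup (iterate_verschiebung_mem_map_ker_truncate hμ) hV

end FrobeniusSpan

end WittVector

namespace TruncatedWittVector

variable {p : ℕ} [Fact p.Prime] {R S : Type*} [CommRing R] [CommRing S]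

theorem truncate_map {m n : ℕ} (hmn : m ≤ n) (f : R →+* S) (x : TruncatedWittVector p n R) :
    truncate hmn (map f x) = map f (truncate hmn x) := by
  ext i
  rw [coeff_truncate, map_coeff', map_coeff', coeff_truncate]

theorem map_comp_truncate (n : ℕ) (f : R →+* S) :
    (map f).comp (WittVector.truncate n) =
      (WittVector.truncate (p := p) n).comp (WittVector.map f) :=
  RingHom.liftOfRightInverse_comp _ _ _ _

theorem ker_truncate_le_map_ker_truncate {A B : Type*} [CommRing A] [CommRing B] [Algebra A B]
    [Algebra.FiniteType A B] [Algebra.FormallyUnramified A B] {m n : ℕ} (hmn : m ≤ n) :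
    RingHom.ker (truncate (p := p) (R := B) hmn) ≤
      (RingHom.ker (truncate (p := p) (R := A) hmn)).map (map (algebraMap A B)) := by
  intro x hx
  obtain ⟨z, rfl⟩ := WittVector.truncate_surjective p n B x
  have hz : z ∈ RingHom.ker (WittVector.truncate (p := p) (R := B) m) := by
    rwa [RingHom.mem_ker, ← truncate_wittVector_truncate hmn]
  have := Ideal.mem_map_of_mem (WittVector.truncate n)
    (WittVector.ker_truncate_le_map_ker_truncate_sup (A := A) hmn hz)
  rw [Ideal.map_sup, (Ideal.map_eq_bot_iff_le_ker _).mpr le_rfl, sup_bot_eq, Ideal.map_map,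
    ← map_comp_truncate, ← Ideal.map_map] at this
  refine Ideal.map_mono ?_ this
  rw [Ideal.map_le_iff_le_comap]
  intro α hα
  rwa [Ideal.mem_comap, RingHom.mem_ker, truncate_wittVector_truncate]

end TruncatedWittVector

universe u

theorem stmt_4_general (p : ℕ) [Fact p.Prime] (A B : Type u) [CommRing A] [CommRing B]
    [Algebra A B] [Algebra.Etale A B] (m n : ℕ) (hmn : m ≤ n) :
    letI : Algebra (TruncatedWittVector p n A) (TruncatedWittVector p m A) :=
      (TruncatedWittVector.truncate hmn).toAlgebra
    letI : Algebra (TruncatedWittVector p n A) (TruncatedWittVector p n B) :=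
      (TruncatedWittVector.map (algebraMap A B)).toAlgebra
    ∃ F : (TruncatedWittVector p m A ⊗[TruncatedWittVector p n A] TruncatedWittVector p n B)
        →+* TruncatedWittVector p m B,
      (∀ (a : TruncatedWittVector p m A) (b : TruncatedWittVector p n B),
        F (a ⊗ₜ b) =
          TruncatedWittVector.map (algebraMap A B) a * TruncatedWittVector.truncate hmn b) ∧
      Function.Bijective F := by
  let : Algebra (TruncatedWittVector p n A) (TruncatedWittVector p m A) :=
    (TruncatedWittVector.truncate hmn).toAlgebra
  let : Algebra (TruncatedWittVector p n A) (TruncatedWittVector p n B) :=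
    (TruncatedWittVector.map (algebraMap A B)).toAlgebra
  let : Algebra (TruncatedWittVector p n A) (TruncatedWittVector p m B) :=
    ((TruncatedWittVector.map (algebraMap A B)).comp (TruncatedWittVector.truncate hmn)).toAlgebra
  let f : TruncatedWittVector p m A →ₐ[TruncatedWittVector p n A] TruncatedWittVector p m B :=
    { TruncatedWittVector.map (algebraMap A B) with commutes' := fun _ => rfl }
  let g : TruncatedWittVector p n B →ₐ[TruncatedWittVector p n A] TruncatedWittVector p m B :=
    { TruncatedWittVector.truncate hmn with
      commutes' := TruncatedWittVector.truncate_map hmn (algebraMap A B) }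
  exact ⟨(Algebra.TensorProduct.lift f g fun _ _ => .all _ _).toRingHom,
    fun a b => Algebra.TensorProduct.lift_tmul f g _ a b,
    Algebra.TensorProduct.lift_bijective_of_ker_le_map f g
      (TruncatedWittVector.truncate_surjective hmn) (TruncatedWittVector.truncate_surjective hmn)
      (TruncatedWittVector.ker_truncate_le_map_ker_truncate hmn)⟩

theorem stmt_4 (p : ℕ) [Fact p.Prime] (A B : Type u) [CommRing A] [CommRing B]
    [Algebra A B] [Algebra.Etale A B] (m n : ℕ) (hm : 1 ≤ m) (hmn : m ≤ n) :
    letI : Algebra (TruncatedWittVector p n A) (TruncatedWittVector p m A) :=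
      (TruncatedWittVector.truncate hmn).toAlgebra
    letI : Algebra (TruncatedWittVector p n A) (TruncatedWittVector p n B) :=
      (TruncatedWittVector.map (algebraMap A B)).toAlgebra
    ∃ F : (TruncatedWittVector p m A ⊗[TruncatedWittVector p n A] TruncatedWittVector p n B)
        →+* TruncatedWittVector p m B,
      (∀ (a : TruncatedWittVector p m A) (b : TruncatedWittVector p n B),
        F (a ⊗ₜ b) =
          TruncatedWittVector.map (algebraMap A B) a * TruncatedWittVector.truncate hmn b) ∧
      Function.Bijective F :=
  stmt_4_general p A B m n hmn
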